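/- For every real ν, every x > 0 and every t > 0, the Shu function solves the parabolic partial differential equation x²·∂²S_ν/∂x² (x,t) + x·∂S_ν/∂x (x,t) - (x² + ν²)·S_ν(x,t) - x²·∂S_ν/∂t (x,t) = 0, where ∂S_ν/∂x and ∂²S_ν/∂x² denote the first and second partial derivatives with respect to x, and ∂S_ν/∂t the partial derivative with respect to t. -/

import Mathlib

open Real MeasureTheory

/-- The Shu function `S_ν(x,t) = (1/2)(x/2)^ν ∫_0^t τ^{-(ν+1)} e^{-τ - x²/(4τ)} dτ`. -/
noncomputable def shu (ν x t : ℝ) : ℝ :=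
  (1/2) * (x/2) ^ ν * ∫ τ in (0:ℝ)..t, τ ^ (-(ν+1)) * Real.exp (-τ - x^2 / (4*τ))

/-!
Write `S_ν = ½ (x/2)^ν F_{-(ν+1)}` with `F_a(x,t) = ∫₀ᵗ τ^a e^{-τ - x²/(4τ)} dτ`. Differentiating
under the integral sign gives `∂ₓ F_a = -(x/2) F_{a-1}`, i.e. the Bessel-type recurrence
`∂ₓ S_ν = (ν/x) S_ν - S_{ν+1}`. Integrating `∂_τ (τ^a e^{-τ - x²/(4τ)})` over `(0, t]`, where the
integrand vanishes at `0⁺`, gives `S_{ν+2} = S_ν + (2(ν+1)/x) S_{ν+1} + ∂ₜ S_ν`. Applying the first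
recurrence twice and eliminating `S_{ν+2}` with the second yields the equation.
-/

open Filter Set Function Topology

lemma intervalIntegrable_of_continuousOn_Ioc_of_tendsto {E : Type*} [NormedAddCommGroup E]
    {f : ℝ → E} {a b : ℝ} {L : E} (hab : a ≤ b) (hf : ContinuousOn f (Ioc a b))
    (ha : Tendsto f (𝓝[>] a) (𝓝 L)) : IntervalIntegrable f volume a b := by
  have hext : ContinuousOn (update f a L) (Icc a b) := by
    rw [continuousOn_update_iff, Icc_sdiff_left]
    exact ⟨hf, fun _ => ha.mono_left (nhdsWithin_mono _ Ioc_subset_Ioi_self)⟩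
  refine (hext.intervalIntegrable_of_Icc hab).congr fun τ hτ => ?_
  rw [uIoc_of_le hab] at hτ
  exact update_of_ne hτ.1.ne' _ _

lemma tendsto_rpow_mul_exp_neg_div_nhdsGT_zero (a : ℝ) {c : ℝ} (hc : 0 < c) :
    Tendsto (fun τ : ℝ => τ ^ a * exp (-(c / τ))) (𝓝[>] 0) (𝓝 0) := by
  refine ((tendsto_rpow_mul_exp_neg_mul_atTop_nhds_zero (-a) c hc).comp
    tendsto_inv_nhdsGT_zero).congr' ?_
  filter_upwards [self_mem_nhdsWithin] with τ (hτ : 0 < τ)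
  simp only [comp_apply, inv_rpow hτ.le, rpow_neg hτ.le, inv_inv, div_eq_mul_inv, neg_mul]

lemma intervalIntegrable_rpow_mul_exp_neg_div (a : ℝ) {c t : ℝ} (hc : 0 < c) (ht : 0 ≤ t) :
    IntervalIntegrable (fun τ : ℝ => τ ^ a * exp (-(c / τ))) volume 0 t := by
  refine intervalIntegrable_of_continuousOn_Ioc_of_tendsto ht ?_
    (tendsto_rpow_mul_exp_neg_div_nhdsGT_zero a hc)
  intro τ hτ
  have : τ ≠ 0 := hτ.1.ne'
  apply ContinuousAt.continuousWithinAt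
  fun_prop (disch := simp [*])

noncomputable def shuKernel (a x τ : ℝ) : ℝ := τ ^ a * exp (-τ - x ^ 2 / (4 * τ))

noncomputable def shuIntegral (a x t : ℝ) : ℝ := ∫ τ in (0:ℝ)..t, shuKernel a x τ

lemma shu_eq_shuIntegral (ν x t : ℝ) :
    shu ν x t = 1 / 2 * (x / 2) ^ ν * shuIntegral (-(ν + 1)) x t :=
  rfl

lemma shuKernel_nonneg (a x : ℝ) {τ : ℝ} (hτ : 0 ≤ τ) : 0 ≤ shuKernel a x τ := by
  unfold shuKernel; positivity

lemma shuKernel_le (a : ℝ) {c x τ : ℝ} (hτ : 0 < τ) (hc : c ≤ x ^ 2 / 4) :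
    shuKernel a x τ ≤ τ ^ a * exp (-(c / τ)) := by
  unfold shuKernel
  gcongr
  have : c / τ ≤ x ^ 2 / (4 * τ) := by
    calc c / τ ≤ x ^ 2 / 4 / τ := by gcongr
      _ = x ^ 2 / (4 * τ) := by ring
  linarith

lemma continuousOn_shuKernel (a x : ℝ) : ContinuousOn (shuKernel a x) (Ioi 0) := by
  intro τ hτ
  have : τ ≠ 0 := ne_of_gt hτ
  unfold shuKernel
  fun_prop (disch := simp [*])

lemma tendsto_shuKernel_nhdsGT_zero (a : ℝ) {x : ℝ} (hx : x ≠ 0) :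
    Tendsto (shuKernel a x) (𝓝[>] 0) (𝓝 0) := by
  refine tendsto_of_tendsto_of_tendsto_of_le_of_le' tendsto_const_nhds
    (tendsto_rpow_mul_exp_neg_div_nhdsGT_zero a (c := x ^ 2 / 4) (by positivity)) ?_ ?_
  all_goals filter_upwards [self_mem_nhdsWithin] with τ (hτ : 0 < τ)
  exacts [shuKernel_nonneg a x hτ.le, shuKernel_le a hτ le_rfl]

lemma intervalIntegrable_shuKernel (a : ℝ) {x t : ℝ} (hx : x ≠ 0) (ht : 0 ≤ t) :
    IntervalIntegrable (shuKernel a x) volume 0 t :=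
  intervalIntegrable_of_continuousOn_Ioc_of_tendsto ht
    ((continuousOn_shuKernel a x).mono Ioc_subset_Ioi_self) (tendsto_shuKernel_nhdsGT_zero a hx)

lemma hasDerivAt_shuKernel_x (a : ℝ) {τ : ℝ} (hτ : τ ≠ 0) (x : ℝ) :
    HasDerivAt (fun y => shuKernel a y τ) (-(x / 2) * shuKernel (a - 1) x τ) x := by
  have h := (((hasDerivAt_pow 2 x).div_const (4 * τ)).const_sub (-τ)).exp.const_mul (τ ^ a)
  refine h.congr_deriv ?_
  norm_num [shuKernel, rpow_sub_one hτ]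
  field_simp
  ring

lemma hasDerivAt_shuKernel_τ (a x : ℝ) {τ : ℝ} (hτ : τ ≠ 0) :
    HasDerivAt (shuKernel a x)
      (x ^ 2 / 4 * shuKernel (a - 2) x τ + a * shuKernel (a - 1) x τ - shuKernel a x τ) τ := by
  have hinner : HasDerivAt (fun τ : ℝ => -τ - x ^ 2 / (4 * τ)) (-1 + x ^ 2 / (4 * τ ^ 2)) τ := by
    have h := (hasDerivAt_id τ).neg.sub
      ((hasDerivAt_const τ (x ^ 2)).div ((hasDerivAt_id τ).const_mul 4) (by simpa))
    refine h.congr_deriv ?_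
    simp only [id]
    field_simp
    ring
  refine ((hasDerivAt_rpow_const (Or.inl hτ)).mul hinner.exp).congr_deriv ?_
  simp only [shuKernel, rpow_sub_one hτ, show (2 : ℝ) = (2 : ℕ) by norm_num, rpow_sub_natCast hτ]
  field_simp
  ring

lemma hasDerivAt_shuIntegral_x (a : ℝ) {x t : ℝ} (hx : 0 < x) (ht : 0 ≤ t) :
    HasDerivAt (fun y => shuIntegral a y t) (-(x / 2) * shuIntegral (a - 1) x t) x := by
  have hball : ∀ y ∈ Metric.ball x (x / 2), x / 2 < y ∧ y < 3 * x / 2 := by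
    intro y hy
    rw [Metric.mem_ball, dist_eq, abs_lt] at hy
    constructor <;> linarith
  have hmeas : ∀ b y, Measurable (shuKernel b y) := by
    intro b y
    unfold shuKernel
    fun_prop
  -- on the ball, `y² / 4 ≥ x² / 16` controls the Gaussian factor uniformly
  have key := intervalIntegral.hasDerivAt_integral_of_dominated_loc_of_deriv_le
    (s := Metric.ball x (x / 2)) (F := fun y τ => shuKernel a y τ)
    (F' := fun y τ => -(y / 2) * shuKernel (a - 1) y τ)
    (bound := fun τ => 3 * x / 4 * (τ ^ (a - 1) * exp (-(x ^ 2 / 16 / τ))))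
    (Metric.ball_mem_nhds x (by positivity))
    (Eventually.of_forall fun y => (hmeas a y).aestronglyMeasurable)
    (intervalIntegrable_shuKernel a hx.ne' ht)
    ((hmeas (a - 1) x).aestronglyMeasurable.const_mul _) ?_
    ((intervalIntegrable_rpow_mul_exp_neg_div (a - 1) (by positivity) ht).const_mul _)
    (Eventually.of_forall fun τ hτ y _ => hasDerivAt_shuKernel_x a ?_ y)
  · simpa only [shuIntegral, intervalIntegral.integral_const_mul] using key.2
  · refine Eventually.of_forall fun τ hτ y hy => ?_
    rw [uIoc_of_le ht] at hτ
    obtain ⟨hy₁, hy₂⟩ := hball y hy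
    rw [norm_mul, norm_neg, Real.norm_of_nonneg (by linarith),
      Real.norm_of_nonneg (shuKernel_nonneg _ _ hτ.1.le)]
    exact mul_le_mul (by linarith) (shuKernel_le _ hτ.1 (by nlinarith))
      (shuKernel_nonneg _ _ hτ.1.le) (by positivity)
  · rw [uIoc_of_le ht] at hτ
    exact hτ.1.ne'

lemma hasDerivAt_shuIntegral_t (a : ℝ) {x t : ℝ} (hx : x ≠ 0) (ht : 0 < t) :
    HasDerivAt (shuIntegral a x) (shuKernel a x t) t :=
  intervalIntegral.integral_hasDerivAt_right (intervalIntegrable_shuKernel a hx ht.le)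
    ((continuousOn_shuKernel a x).stronglyMeasurableAtFilter isOpen_Ioi t ht)
    ((continuousOn_shuKernel a x).continuousAt (Ioi_mem_nhds ht))

lemma shuIntegral_recurrence (a : ℝ) {x t : ℝ} (hx : x ≠ 0) (ht : 0 < t) :
    x ^ 2 / 4 * shuIntegral (a - 2) x t + a * shuIntegral (a - 1) x t - shuIntegral a x t =
      shuKernel a x t := by
  have hint b := intervalIntegrable_shuKernel b hx ht.le
  have hftc := intervalIntegral.integral_eq_sub_of_hasDerivAt_of_tendsto ht
    (fun τ hτ => hasDerivAt_shuKernel_τ a x hτ.1.ne')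
    (((hint _).const_mul _).add ((hint _).const_mul _) |>.sub (hint a))
    (tendsto_shuKernel_nhdsGT_zero a hx)
    (((continuousOn_shuKernel a x).continuousAt (Ioi_mem_nhds ht)).tendsto.mono_left
      nhdsWithin_le_nhds)
  rwa [intervalIntegral.integral_sub (((hint _).const_mul _).add ((hint _).const_mul _)) (hint a),
    intervalIntegral.integral_add ((hint _).const_mul _) ((hint _).const_mul _),
    intervalIntegral.integral_const_mul, intervalIntegral.integral_const_mul, sub_zero] at hftc

lemma hasDerivAt_shu_x (ν : ℝ) {x t : ℝ} (hx : 0 < x) (ht : 0 ≤ t) :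
    HasDerivAt (fun y => shu ν y t) (ν / x * shu ν x t - shu (ν + 1) x t) x := by
  have hpow : HasDerivAt (fun y : ℝ => (y / 2) ^ ν) (1 / 2 * ν * (x / 2) ^ (ν - 1)) x :=
    ((hasDerivAt_id x).div_const 2).rpow_const (Or.inl (by positivity))
  refine ((hpow.const_mul (1 / 2)).mul (hasDerivAt_shuIntegral_x _ hx ht)).congr_deriv ?_
  have hx2 : x / 2 ≠ 0 := by positivity
  rw [shu_eq_shuIntegral, shu_eq_shuIntegral, show -(ν + 1) - 1 = -(ν + 1 + 1) by ring,
    rpow_sub_one hx2, rpow_add_one hx2]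
  field_simp
  ring

lemma hasDerivAt_shu_t (ν : ℝ) {x t : ℝ} (hx : x ≠ 0) (ht : 0 < t) :
    HasDerivAt (shu ν x) (1 / 2 * (x / 2) ^ ν * shuKernel (-(ν + 1)) x t) t :=
  (hasDerivAt_shuIntegral_t _ hx ht).const_mul _

lemma shu_add_two (ν : ℝ) {x t : ℝ} (hx : x ≠ 0) (ht : 0 < t) :
    shu (ν + 2) x t = shu ν x t + 2 * (ν + 1) / x * shu (ν + 1) x t
      + 1 / 2 * (x / 2) ^ ν * shuKernel (-(ν + 1)) x t := by
  have h := shuIntegral_recurrence (-(ν + 1)) hx ht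
  have hx2 : x / 2 ≠ 0 := by positivity
  rw [show -(ν + 1) - 2 = -(ν + 2 + 1) by ring, show -(ν + 1) - 1 = -(ν + 1 + 1) by ring] at h
  rw [shu_eq_shuIntegral, shu_eq_shuIntegral, shu_eq_shuIntegral, ← h,
    show ν + 2 = ν + (2 : ℕ) by norm_num, rpow_add_natCast hx2, rpow_add_one hx2]
  field_simp
  ring

theorem stmt_11 (ν x t : ℝ) (hx : 0 < x) (ht : 0 < t) :
    x^2 * iteratedDeriv 2 (fun y => shu ν y t) x
      + x * deriv (fun y => shu ν y t) x
      - (x^2 + ν^2) * shu ν x t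
      - x^2 * deriv (fun s => shu ν x s) t = 0 := by
  have hS' : ∀ μ, ∀ y > 0, HasDerivAt (fun y => shu μ y t)
      (μ / y * shu μ y t - shu (μ + 1) y t) y :=
    fun μ y hy => hasDerivAt_shu_x μ hy ht.le
  have hderiv : deriv (fun y => shu ν y t) =ᶠ[𝓝 x]
      fun y => ν / y * shu ν y t - shu (ν + 1) y t := by
    filter_upwards [Ioi_mem_nhds hx] with y hy using (hS' ν y hy).deriv
  have hS'' : HasDerivAt (fun y => ν / y * shu ν y t - shu (ν + 1) y t)
      (ν * -(x ^ 2)⁻¹ * shu ν x t + ν / x * (ν / x * shu ν x t - shu (ν + 1) x t)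
        - ((ν + 1) / x * shu (ν + 1) x t - shu (ν + 1 + 1) x t)) x := by
    simpa only [div_eq_mul_inv, Pi.mul_def, Pi.sub_def] using
      (((hasDerivAt_inv hx.ne').const_mul ν).mul (hS' ν x hx)).sub (hS' (ν + 1) x hx)
  rw [iteratedDeriv_succ, iteratedDeriv_one, hderiv.deriv_eq, hS''.deriv, (hS' ν x hx).deriv,
    (hasDerivAt_shu_t ν hx.ne' ht).deriv, show ν + 1 + 1 = ν + 2 by ring, shu_add_two ν hx.ne' ht]
  field_simp
  ring
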